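/- arXiv:1812.02742 — 2 statements merged into one kernel-verified Lean document; each statement's English description precedes it below -/
import Mathlib

section
/- For all integers n ≥ 2, the signed univariate excedance polynomial over S_n satisfies ∑_{π ∈ S_n} (-1)^{inv(π)} t^{exc(π)} = (1 - t)^{n-1}. -/
/-!
Since `(-1) ^ inv σ` is the sign of `σ`, the sum is the Leibniz expansion of the determinant of
the `n × n` matrix with `x` strictly below the diagonal and `1` elsewhere. Subtracting each column
from the next one makes that matrix lower triangular with diagonal `1, 1 - x, …, 1 - x`.
-/

open Finset Polynomial

/-- Number of excedances of a permutation of `{0,…,n-1}`. -/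
def excA {n : ℕ} (π : Equiv.Perm (Fin n)) : ℕ :=
  (Finset.univ.filter (fun i => i < π i)).card

/-- Number of inversions. -/
def invA {n : ℕ} (π : Equiv.Perm (Fin n)) : ℕ :=
  (Finset.univ.filter (fun p : Fin n × Fin n => p.1 < p.2 ∧ π p.2 < π p.1)).card

theorem sign_eq_neg_one_pow_invA {n : ℕ} (σ : Equiv.Perm (Fin n)) :
    σ.sign = (-1) ^ invA σ := by
  rw [σ.sign_eq_prod_prod_Ioi, invA, ← prod_const, prod_filter, Fintype.prod_prod_type]
  refine prod_congr rfl fun i _ => ?_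
  rw [← filter_lt_eq_Ioi, prod_filter]
  refine prod_congr rfl fun j _ => ?_
  rcases lt_or_ge i j with hij | hji
  · have hσ : σ i ≠ σ j := σ.injective.ne hij.ne
    rcases hσ.lt_or_gt with h | h <;> simp [hij, h, h.not_gt]
  · simp [hji.not_gt]

section ExcedanceMatrix

variable {R : Type*} [CommRing R]

def excMatrix (n : ℕ) (x : R) : Matrix (Fin n) (Fin n) R :=
  Matrix.of fun i j => if j < i then x else 1

theorem prod_excMatrix_perm_apply {n : ℕ} (x : R) (σ : Equiv.Perm (Fin n)) :
    ∏ i, excMatrix n x (σ i) i = x ^ excA σ := by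
  simp [excMatrix, excA, prod_ite]

theorem det_excMatrix (n : ℕ) (x : R) : (excMatrix n x).det = (1 - x) ^ (n - 1) := by
  rcases n with _ | m
  · simp
  let B : Matrix (Fin (m + 1)) (Fin (m + 1)) R := Matrix.of fun i j =>
    Fin.cases (if 0 < i then x else 1) (fun k => if i = k.succ then 1 - x else 0) j
  have hB : B.IsLowerTriangular := by
    intro i j hij
    cases j using Fin.cases with
    | zero => exact absurd hij (Fin.not_lt_zero i)
    | succ k =>
      simp only [B, Matrix.of_apply, Fin.cases_succ, ite_eq_right_iff]
      rintro rfl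
      exact absurd hij (lt_irrefl _)
  rw [Matrix.det_eq_of_forall_col_eq_smul_add_pred (B := B) (fun _ => 1),
    Matrix.det_of_isLowerTriangular B hB, Fin.prod_univ_succ]
  · simp [B]
  · intro i
    simp [B, excMatrix]
  · intro i j
    simp only [excMatrix, B, Matrix.of_apply, Fin.cases_succ, one_mul]
    split_ifs <;> simp_all [Fin.lt_def, Fin.ext_iff] <;> omega

theorem sum_neg_one_pow_invA_mul_pow_excA (n : ℕ) (x : R) :
    ∑ σ : Equiv.Perm (Fin n), (-1 : R) ^ invA σ * x ^ excA σ = (1 - x) ^ (n - 1) := by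
  rw [← det_excMatrix, Matrix.det_apply']
  refine sum_congr rfl fun σ _ => ?_
  rw [prod_excMatrix_perm_apply, sign_eq_neg_one_pow_invA]
  push_cast
  rfl

end ExcedanceMatrix

theorem stmt2_general (n : ℕ) :
    (∑ π : Equiv.Perm (Fin n),
      Polynomial.C ((-1 : ℚ) ^ invA π) * (Polynomial.X : Polynomial ℚ) ^ excA π)
    = (1 - Polynomial.X : Polynomial ℚ) ^ (n - 1) := by
  simp only [map_pow, map_neg, map_one]
  exact sum_neg_one_pow_invA_mul_pow_excA n X

theorem stmt2 (n : ℕ) (hn : 2 ≤ n) :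
    (∑ π : Equiv.Perm (Fin n),
      Polynomial.C ((-1 : ℚ) ^ invA π) * (Polynomial.X : Polynomial ℚ) ^ excA π)
    = (1 - Polynomial.X : Polynomial ℚ) ^ (n - 1) :=
  stmt2_general n
end

section
/- For all n ≥ 2, D AExc_n^+(s,t) = D AExc_n^-(s,t) = (1/2) D A_n(s,t), where D = ∂/∂s + ∂/∂t, AExc_n^±(s,t) are the bivariate excedance polynomials over even/odd permutations of S_n, and A_n(s,t) = ∑_{π ∈ S_n} t^{exc(π)} s^{nexc(π)-1}. -/
open Finset MvPolynomial

/-- Number of non-excedances. -/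
def nexcA {n : ℕ} (π : Equiv.Perm (Fin n)) : ℕ := n - excA π

/-- The bivariate excedance polynomial `A_n(s,t)` (with `s = X 0`, `t = X 1`). -/
noncomputable def Aexc (n : ℕ) : MvPolynomial (Fin 2) ℚ :=
  ∑ π : Equiv.Perm (Fin n), X 1 ^ excA π * X 0 ^ (nexcA π - 1)

/-- The bivariate excedance polynomial over even permutations. -/
noncomputable def AexcP (n : ℕ) : MvPolynomial (Fin 2) ℚ :=
  ∑ π ∈ Finset.univ.filter (fun π : Equiv.Perm (Fin n) => Even (invA π)),
    X 1 ^ excA π * X 0 ^ (nexcA π - 1)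

/-- The bivariate excedance polynomial over odd permutations. -/
noncomputable def AexcM (n : ℕ) : MvPolynomial (Fin 2) ℚ :=
  ∑ π ∈ Finset.univ.filter (fun π : Equiv.Perm (Fin n) => ¬ Even (invA π)),
    X 1 ^ excA π * X 0 ^ (nexcA π - 1)

/-- The operator `D = d/ds + d/dt`. -/
noncomputable def Dop (f : MvPolynomial (Fin 2) ℚ) : MvPolynomial (Fin 2) ℚ :=
  pderiv 0 f + pderiv 1 f

/-! In the Leibniz expansion of `det (stepToeplitz s t n)` (entries `t` strictly below the
diagonal, `s` elsewhere) the permutation `σ` contributes `sign σ • t ^ exc σ * s ^ nexc σ`, so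
`s * (A⁺ₙ - A⁻ₙ)` is this determinant. Column operations show that it equals `s * (s - t) ^ (n - 1)`,
hence `A⁺ₙ - A⁻ₙ = (s - t) ^ (n - 1)`, which `D` kills. With `A⁺ₙ + A⁻ₙ = Aₙ` the claim follows. -/

open Equiv Matrix

namespace Equiv.Perm

theorem sign_eq_signAux {n : ℕ} (σ : Perm (Fin n)) : sign σ = signAux σ := by
  induction σ using swap_induction_on with
  | one => rw [map_one, signAux_one]
  | swap_mul τ x y hxy ih => rw [map_mul, signAux_mul, ih, sign_swap hxy, signAux_swap hxy]

theorem signAux_eq_neg_one_pow_invA {n : ℕ} (σ : Perm (Fin n)) :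
    signAux σ = (-1) ^ invA σ := by
  rw [signAux, prod_ite, prod_const, prod_const, one_pow, mul_one]
  congr 1
  refine card_bij (fun a _ => (a.2, a.1)) ?_ ?_ ?_
  · rintro ⟨i, j⟩ h
    simp only [mem_filter, mem_finPairsLT, mem_univ, true_and] at h ⊢
    exact ⟨h.1, h.2.lt_of_ne fun hij => h.1.ne' (σ.injective hij)⟩
  · rintro ⟨i, j⟩ - ⟨i', j'⟩ - h
    obtain ⟨rfl, rfl⟩ := Prod.mk.inj h
    rfl
  · rintro ⟨i, j⟩ h
    simp only [mem_filter, mem_univ, true_and] at h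
    exact ⟨⟨j, i⟩, by simp [mem_finPairsLT, h.1, h.2.le], rfl⟩

theorem sign_eq_neg_one_pow_invA {n : ℕ} (σ : Perm (Fin n)) : sign σ = (-1) ^ invA σ := by
  rw [sign_eq_signAux, signAux_eq_neg_one_pow_invA]

end Equiv.Perm

namespace Matrix

variable {R : Type*} [CommRing R]

def stepToeplitz (a b : R) (n : ℕ) : Matrix (Fin n) (Fin n) R :=
  of fun i j => if j < i then b else a

variable (R) in
def superdiag (n : ℕ) : Matrix (Fin n) (Fin n) R :=
  of fun k j => if (j : ℕ) = k + 1 then 1 else 0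

theorem det_one_sub_superdiag (n : ℕ) : (1 - superdiag R n).det = 1 := by
  rw [det_of_isUpperTriangular]
  · simp [superdiag]
  · refine blockTriangular_one.sub fun i j hji => ?_
    have : (j : ℕ) ≠ i + 1 := by simp only [id, Fin.lt_def] at hji; omega
    simp [superdiag, this]

theorem mul_superdiag_apply_zero {m : ℕ} (M : Matrix (Fin (m + 1)) (Fin (m + 1)) R)
    (i : Fin (m + 1)) : (M * superdiag R (m + 1)) i 0 = 0 := by
  simp [mul_apply, superdiag]

theorem mul_superdiag_apply_succ {m : ℕ} (M : Matrix (Fin (m + 1)) (Fin (m + 1)) R)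
    (i : Fin (m + 1)) (j : Fin m) : (M * superdiag R (m + 1)) i j.succ = M i j.castSucc := by
  have hS : ∀ k, superdiag R (m + 1) k j.succ = if k = j.castSucc then 1 else 0 := by
    simp [superdiag, Fin.ext_iff, eq_comm]
  simp [mul_apply, hS]

/-- Subtracting from each column its left neighbour makes `stepToeplitz a b` lower triangular,
with diagonal `a, a - b, …, a - b`. -/
theorem det_stepToeplitz (a b : R) (m : ℕ) :
    (stepToeplitz a b (m + 1)).det = a * (a - b) ^ m := by
  set A := stepToeplitz a b (m + 1)
  have hcol_zero : ∀ i, (A * (1 - superdiag R (m + 1))) i 0 = A i 0 := by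
    intro i; rw [mul_sub, mul_one, sub_apply, mul_superdiag_apply_zero, sub_zero]
  have hcol_succ : ∀ i (j : Fin m),
      (A * (1 - superdiag R (m + 1))) i j.succ = A i j.succ - A i j.castSucc := by
    intro i j; rw [mul_sub, mul_one, sub_apply, mul_superdiag_apply_succ]
  rw [← mul_one A.det, ← det_one_sub_superdiag (m + 1), ← det_mul, det_of_isLowerTriangular]
  · simp only [Fin.prod_univ_succ, hcol_zero, hcol_succ]
    simp [A, stepToeplitz]
  · intro i j hij
    rw [OrderDual.toDual_lt_toDual] at hij
    obtain ⟨j, rfl⟩ := Fin.exists_succ_eq.2 (Fin.ne_zero_of_lt hij)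
    have hj : ¬ j.castSucc < i := by
      simp only [Fin.lt_def, Fin.val_succ, Fin.val_castSucc] at hij ⊢
      omega
    rw [hcol_succ]
    simp [A, stepToeplitz, hij.not_gt, hj]

end Matrix

theorem excA_lt_of_perm_succ {n : ℕ} (σ : Perm (Fin (n + 1))) : excA σ < n + 1 := by
  have hlast : ¬ Fin.last n < σ (Fin.last n) := (Fin.le_last _).not_gt
  simpa [excA] using card_lt_card (filter_ssubset.2 ⟨Fin.last n, mem_univ _, hlast⟩)

theorem prod_stepToeplitz_perm {R : Type*} [CommRing R] (a b : R) {n : ℕ} (σ : Perm (Fin n)) :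
    ∏ i, stepToeplitz a b n (σ i) i = b ^ excA σ * a ^ nexcA σ := by
  simp only [stepToeplitz, of_apply, prod_ite, prod_const]
  congr 2
  have hsplit := card_filter_add_card_filter_not (s := univ) (fun i : Fin n => i < σ i)
  rw [card_univ, Fintype.card_fin] at hsplit
  rw [nexcA, excA]
  omega

theorem AexcP_sub_AexcM_eq_sum_sign (n : ℕ) :
    AexcP n - AexcM n = ∑ σ : Perm (Fin n),
      Perm.sign σ • (X 1 ^ excA σ * X 0 ^ (nexcA σ - 1) : MvPolynomial (Fin 2) ℚ) := by
  rw [← sum_filter_add_sum_filter_not univ (fun σ : Perm (Fin n) => Even (invA σ)), AexcP, AexcM,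
    sub_eq_add_neg, ← sum_neg_distrib]
  congr 1 <;> refine sum_congr rfl fun σ hσ => ?_ <;> rw [Perm.sign_eq_neg_one_pow_invA]
  · rw [(mem_filter.1 hσ).2.neg_one_pow, one_smul]
  · rw [(Nat.not_even_iff_odd.1 (mem_filter.1 hσ).2).neg_one_pow, Units.neg_smul, one_smul]

theorem AexcP_sub_AexcM (n : ℕ) : AexcP n - AexcM n = (X 0 - X 1) ^ (n - 1) := by
  cases n with
  | zero => simp [AexcP, AexcM, invA, excA, nexcA]
  | succ m =>
    refine mul_left_cancel₀ (X_ne_zero (0 : Fin 2)) ?_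
    rw [Nat.add_sub_cancel, ← det_stepToeplitz, det_apply, AexcP_sub_AexcM_eq_sum_sign, mul_sum]
    refine sum_congr rfl fun σ _ => ?_
    obtain ⟨k, hk⟩ : ∃ k, nexcA σ = k + 1 :=
      ⟨nexcA σ - 1, by have := excA_lt_of_perm_succ σ; rw [nexcA]; omega⟩
    rw [mul_smul_comm, prod_stepToeplitz_perm, hk, Nat.add_sub_cancel, pow_succ]
    congr 1
    ring

theorem AexcP_add_AexcM (n : ℕ) : AexcP n + AexcM n = Aexc n :=
  sum_filter_add_sum_filter_not _ _ _

theorem Dop_add (f g : MvPolynomial (Fin 2) ℚ) : Dop (f + g) = Dop f + Dop g := by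
  simp only [Dop, map_add]
  abel

theorem Dop_sub (f g : MvPolynomial (Fin 2) ℚ) : Dop (f - g) = Dop f - Dop g := by
  simp only [Dop, map_sub]
  abel

theorem Dop_X_sub_X_pow (k : ℕ) : Dop ((X 0 - X 1 : MvPolynomial (Fin 2) ℚ) ^ k) = 0 := by
  simp [Dop, Derivation.leibniz_pow, pderiv_X]

theorem stmt9_general (n : ℕ) :
    Dop (AexcP n) = Dop (AexcM n) ∧ Dop (AexcM n) = (1 / 2 : ℚ) • Dop (Aexc n) := by
  have hPM : Dop (AexcP n) = Dop (AexcM n) := by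
    rw [← sub_eq_zero, ← Dop_sub, AexcP_sub_AexcM, Dop_X_sub_X_pow]
  refine ⟨hPM, ?_⟩
  rw [← AexcP_add_AexcM, Dop_add, hPM, ← two_smul ℚ, smul_smul]
  norm_num

theorem stmt9 (n : ℕ) (hn : 2 ≤ n) :
    Dop (AexcP n) = Dop (AexcM n) ∧ Dop (AexcM n) = (1 / 2 : ℚ) • Dop (Aexc n) :=
  stmt9_general n
end
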